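/- Let Q be a finite poset and n ≥ 1. Then the number of down-sets of the product poset C_n × Q (where C_n is an n-element chain) equals the sum over all down-sets N of Q of the number of down-sets of the product C_{n-1} × Q|_N. -/
import Mathlib

open Classical in
/-- The bottom layer of a lower set of `Fin (m+1) × β` is a lower set of `β`. -/
private def botLayer {β : Type*} [PartialOrder β] {m : ℕ}
    (D : {D : Set (Fin (m + 1) × β) // IsLowerSet D}) : {N : Set β // IsLowerSet N} :=
  ⟨{b : β | ((0 : Fin (m + 1)), b) ∈ D.1}, by
    intro b c hcb hb
    exact D.2 (Prod.mk_le_mk.2 ⟨le_refl _, hcb⟩) hb⟩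

private def fiberEquiv {β : Type*} [PartialOrder β] {m : ℕ} (N : {N : Set β // IsLowerSet N}) :
    {D : {D : Set (Fin (m + 1) × β) // IsLowerSet D} // botLayer D = N} ≃
      {D : Set (Fin m × ↥(N : Set β)) // IsLowerSet D} where
  toFun D := ⟨{p : Fin m × ↥(N : Set β) | (p.1.succ, (p.2 : β)) ∈ D.1.1}, by
    rintro ⟨j, b⟩ ⟨j', b'⟩ ⟨hj, hb⟩ h
    exact D.1.2 (Prod.mk_le_mk.2 ⟨Fin.succ_le_succ_iff.2 hj, hb⟩) h⟩
  invFun D' := by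
    refine ⟨⟨{p : Fin (m + 1) × β | p.2 ∈ N.1 ∧
        ∀ (h : p.2 ∈ N.1) (j : Fin m), j.succ ≤ p.1 → (j, ⟨p.2, h⟩) ∈ D'.1}, ?_⟩, ?_⟩
    · rintro ⟨i, b⟩ ⟨i', b'⟩ ⟨hi, hb⟩ ⟨hbN, hD⟩
      refine ⟨N.2 hb hbN, fun h j hj => ?_⟩
      exact D'.2 (Prod.mk_le_mk.2 ⟨le_refl _, hb⟩) (hD hbN j (le_trans hj hi))
    · apply Subtype.ext
      ext b
      simp only [botLayer, Set.mem_setOf_eq]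
      constructor
      · rintro ⟨h, -⟩; exact h
      · intro h
        refine ⟨h, fun h' j hj => absurd hj ?_⟩
        simp [Fin.le_def, Fin.succ]
  left_inv := by
    rintro ⟨⟨D, hD⟩, hN⟩
    apply Subtype.ext
    apply Subtype.ext
    have hN' : {b : β | ((0 : Fin (m + 1)), b) ∈ D} = N.1 := congrArg Subtype.val hN
    ext ⟨i, b⟩
    simp only [Set.mem_setOf_eq]
    constructor
    · rintro ⟨hbN, h⟩
      rcases Fin.eq_zero_or_eq_succ i with rfl | ⟨j, rfl⟩
      · rw [← hN'] at hbN; exact hbN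
      · exact h hbN j (le_refl _)
    · intro h
      refine ⟨?_, fun h' j hj => hD (Prod.mk_le_mk.2 ⟨hj, le_refl _⟩) h⟩
      rw [← hN']
      exact hD (Prod.mk_le_mk.2 ⟨Fin.zero_le _, le_refl _⟩) h
  right_inv := by
    rintro ⟨D', hD'⟩
    apply Subtype.ext
    ext ⟨j, b, hb⟩
    simp only [Set.mem_setOf_eq]
    constructor
    · rintro ⟨hbN, h⟩
      exact h hb j (le_refl _)
    · intro h
      exact ⟨hb, fun h' j' hj' =>
        hD' (Prod.mk_le_mk.2 ⟨Fin.succ_le_succ_iff.1 hj', le_refl _⟩) h⟩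

theorem stmt5 {β : Type*} [Fintype β] [PartialOrder β] (n : ℕ) (hn : 1 ≤ n) :
    Nat.card {D : Set (Fin n × β) // IsLowerSet D} =
      ∑ᶠ N : {N : Set β // IsLowerSet N},
        Nat.card {D : Set (Fin (n - 1) × ↥(N : Set β)) // IsLowerSet D} := by
  classical
  obtain ⟨m, rfl⟩ : ∃ m, n = m + 1 := ⟨n - 1, (Nat.succ_pred_eq_of_pos hn).symm⟩
  have key : {D : Set (Fin (m + 1) × β) // IsLowerSet D} ≃
      Σ N : {N : Set β // IsLowerSet N}, {D : Set (Fin m × ↥(N : Set β)) // IsLowerSet D} :=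
    (Equiv.sigmaFiberEquiv (botLayer (β := β) (m := m))).symm.trans
      (Equiv.sigmaCongrRight fiberEquiv)
  haveI : Fintype {N : Set β // IsLowerSet N} := Fintype.ofFinite _
  haveI : ∀ N : {N : Set β // IsLowerSet N},
      Fintype {D : Set (Fin m × ↥(N : Set β)) // IsLowerSet D} := fun N => Fintype.ofFinite _
  rw [finsum_eq_sum_of_fintype, Nat.card_congr key, Nat.card_eq_fintype_card,
    Fintype.card_sigma]
  simp only [Nat.card_eq_fintype_card]
  exact Finset.sum_congr rfl fun i _ => Fintype.card_congr (Equiv.refl _)
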